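/- Let G be a group. For all k, l ≥ 1, the commutator subgroup [A_G(k), A_G(l)] is contained in A_G(k+l); in particular the Andreadakis–Johnson filtration is an N-series of IA(G), so Γ_{IA(G)}(k) ⊆ A_G(k) for every k ≥ 1. -/

import Mathlib

/-!
STATEMENT 1: Let G be a group. For all k, l ≥ 1, the commutator subgroup
[A_G(k), A_G(l)] is contained in A_G(k+l); in particular the Andreadakis–Johnson
filtration is an N-series of IA(G), so Γ_{IA(G)}(k) ⊆ A_G(k) for every k ≥ 1.

Here `Γ_G(m) = lowerCentralSeries G (m-1)`, `A_G(k) = johnsonFiltration G k` is the kernel of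
`Aut G → Aut (G/Γ_G(k+1))`, and `IA(G) = A_G(1)`.  The lower central series of `IA(G)`,
viewed inside `MulAut G`, is `Subgroup.map (johnsonFiltration G 1).subtype
(lowerCentralSeries ↥(johnsonFiltration G 1) (k-1))`.
-/

/-- For a subgroup `N` of `G`, the subgroup of automorphisms `σ` with `x⁻¹ · x^σ ∈ N`
for all `x`. -/
def fixFiltration {G : Type*} [Group G] (N : Subgroup G) : Subgroup (MulAut G) where
  carrier := {σ | ∀ x : G, x⁻¹ * σ x ∈ N}
  one_mem' := by intro x; simpa using N.one_mem
  mul_mem' := by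
    intro σ τ hσ hτ x
    have h3 : σ (x⁻¹ * τ x) ∈ N := by
      have h4 : σ (x⁻¹ * τ x) =
          (x⁻¹ * τ x) * ((x⁻¹ * τ x)⁻¹ * σ (x⁻¹ * τ x)) := by group
      rw [h4]
      exact N.mul_mem (hτ x) (hσ _)
    have h5 : x⁻¹ * (σ * τ) x = (x⁻¹ * σ x) * σ (x⁻¹ * τ x) := by
      rw [MulAut.mul_apply, map_mul, map_inv]; group
    rw [h5]
    exact N.mul_mem (hσ x) h3
  inv_mem' := by
    intro σ hσ x
    have h := hσ (σ⁻¹ x)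
    rw [MulAut.apply_inv_self] at h
    simpa [mul_inv_rev] using N.inv_mem h

/-- The Andreadakis–Johnson filtration: `johnsonFiltration G k = 𝒜_G(k)`, the kernel of
`Aut G → Aut (G/Γ_G(k+1))`, where `Γ_G(k+1) = lowerCentralSeries G k`. -/
def johnsonFiltration (G : Type*) [Group G] (k : ℕ) : Subgroup (MulAut G) :=
  fixFiltration ((⊤ : Subgroup G).lowerCentralSeries k)

theorem mem_johnsonFiltration {G : Type*} [Group G] {k : ℕ} {σ : MulAut G} :
    σ ∈ johnsonFiltration G k ↔ ∀ x : G, x⁻¹ * σ x ∈ (⊤ : Subgroup G).lowerCentralSeries k :=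
  Iff.rfl

/-!
An automorphism `σ ∈ A_G(k)` moves every element of `Γ_G(n+1)` only by an element of
`Γ_G(n+k+1)`: this follows by induction on `n`, since `⁅Γ_G(n+k), G⁆` and `⁅Γ_G(k), Γ_G(n)⁆`
both lie in `Γ_G(n+k+1)` (the latter by the three subgroups lemma). Given `σ ∈ A_G(k)` and
`τ ∈ A_G(l)`, write `σ y = y a` and `τ y = y b` with `a ∈ Γ_G(k+1)`, `b ∈ Γ_G(l+1)`. Modulo
`Γ_G(k+l+1)` we then get `σ τ y ≡ y a b` and `τ σ y ≡ y b a`, and `a`, `b` commute there, so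
`⁅σ, τ⁆ ∈ A_G(k+l)`. The inclusion `Γ_{IA(G)}(k) ⊆ A_G(k)` follows by induction on `k`.
-/

open scoped commutatorElement

namespace Subgroup

variable {G : Type*} [Group G]

theorem commutator_commutator_le_of_rotate {H₁ H₂ H₃ N : Subgroup G} [N.Normal]
    (h1 : ⁅⁅H₂, H₃⁆, H₁⁆ ≤ N) (h2 : ⁅⁅H₃, H₁⁆, H₂⁆ ≤ N) : ⁅⁅H₁, H₂⁆, H₃⁆ ≤ N := by
  have in_kernel : ∀ {A B C : Subgroup G}, ⁅⁅A, B⁆, C⁆ ≤ N ↔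
      ⁅⁅A.map (QuotientGroup.mk' N), B.map (QuotientGroup.mk' N)⁆,
        C.map (QuotientGroup.mk' N)⁆ = ⊥ := by
    intro A B C
    rw [← map_commutator, ← map_commutator, map_eq_bot_iff, QuotientGroup.ker_mk']
  rw [in_kernel]
  exact commutator_commutator_eq_bot_of_rotate (in_kernel.mp h1) (in_kernel.mp h2)

theorem commutator_lowerCentralSeries_le (m n : ℕ) :
    ⁅(⊤ : Subgroup G).lowerCentralSeries m, (⊤ : Subgroup G).lowerCentralSeries n⁆ ≤
      (⊤ : Subgroup G).lowerCentralSeries (m + n + 1) := by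
  induction n generalizing m with
  | zero => exact le_rfl
  | succ n ih =>
    rw [lowerCentralSeries_succ, commutator_comm]
    apply commutator_commutator_le_of_rotate
    · rw [commutator_comm ⊤, ← lowerCentralSeries_succ]
      exact (ih (m + 1)).trans_eq (by rw [Nat.add_right_comm m 1 n, Nat.add_assoc m n 1])
    · exact (commutator_mono (ih m) le_rfl).trans_eq
        (by rw [← lowerCentralSeries_succ, Nat.add_assoc m n 1])

theorem map_subtype_lowerCentralSeries_le {H : Subgroup G} {A : ℕ → Subgroup G}
    (hH : H ≤ A 1) (hA : ∀ m, ⁅A (m + 1), H⁆ ≤ A (m + 2)) (m : ℕ) :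
    ((⊤ : Subgroup H).lowerCentralSeries m).map H.subtype ≤ A (m + 1) := by
  have map_top : (⊤ : Subgroup H).map H.subtype = H := by
    rw [← MonoidHom.range_eq_map, range_subtype]
  induction m with
  | zero => rwa [lowerCentralSeries_zero, map_top]
  | succ m ih =>
    rw [lowerCentralSeries_succ, map_commutator, map_top]
    exact (commutator_mono ih le_rfl).trans (hA m)

end Subgroup

theorem QuotientGroup.commute_mk_of_commutatorElement_mem {G : Type*} [Group G]
    {N : Subgroup G} [N.Normal] {a b : G} (h : ⁅a, b⁆ ∈ N) : Commute (a : G ⧸ N) b := by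
  rw [← commutatorElement_eq_one_iff_commute, ← QuotientGroup.mk'_apply, ← QuotientGroup.mk'_apply,
    ← map_commutatorElement, QuotientGroup.mk'_apply]
  exact (QuotientGroup.eq_one_iff _).mpr h

theorem commutatorElement_mul_mul_of_commute {H : Type*} [Group H] {y x a b : H}
    (ha : ∀ z, Commute a z) (hb : Commute b y) : ⁅y * a, x * b⁆ = ⁅y, x⁆ := by
  have hax : a * (x * b) * a⁻¹ = x * b := by rw [(ha _).eq, mul_inv_cancel_right]
  calc ⁅y * a, x * b⁆ = y * (a * (x * b) * a⁻¹) * y⁻¹ * b⁻¹ * x⁻¹ := by group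
    _ = y * x * (b * y⁻¹) * b⁻¹ * x⁻¹ := by rw [hax]; group
    _ = ⁅y, x⁆ := by rw [hb.inv_right.eq]; group

section johnsonFiltration

variable {G : Type*} [Group G]

local notation "Γ" => Subgroup.lowerCentralSeries (⊤ : Subgroup G)

theorem commutatorElement_mem_fixFiltration_iff {N : Subgroup G} [N.Normal] {σ τ : MulAut G} :
    ⁅σ, τ⁆ ∈ fixFiltration N ↔ ∀ y, (σ (τ y) : G ⧸ N) = τ (σ y) := by
  change (∀ x, x⁻¹ * ⁅σ, τ⁆ x ∈ N) ↔ _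
  refine (τ * σ).surjective.forall.trans (forall_congr' fun y => ?_)
  rw [eq_comm, QuotientGroup.eq]
  simp [commutatorElement_def]

theorem inv_mul_apply_mem_lowerCentralSeries {k : ℕ} {σ : MulAut G}
    (hσ : σ ∈ johnsonFiltration G k) {n : ℕ} {y : G} (hy : y ∈ Γ n) : y⁻¹ * σ y ∈ Γ (n + k) := by
  induction n generalizing y with
  | zero => simpa using hσ y
  | succ n ih =>
    rw [Nat.add_right_comm]
    let π := QuotientGroup.mk' (Γ (n + k + 1))
    suffices h : Γ (n + 1) ≤ MonoidHom.eqLocus π (π.comp σ.toMonoidHom) from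
      QuotientGroup.eq.mp (h hy)
    rw [Subgroup.lowerCentralSeries_succ, Subgroup.commutator_le]
    intro g hg x _
    obtain ⟨a, ha, hσg⟩ : ∃ a ∈ Γ (n + k), σ g = g * a :=
      ⟨_, ih hg, (mul_inv_cancel_left g _).symm⟩
    obtain ⟨b, hb, hσx⟩ : ∃ b ∈ Γ k, σ x = x * b := ⟨_, hσ x, (mul_inv_cancel_left x _).symm⟩
    have a_central : ∀ z, Commute (π a) z := by
      rintro ⟨w⟩
      exact QuotientGroup.commute_mk_of_commutatorElement_mem
        (Subgroup.commutator_mem_commutator ha (Subgroup.mem_top w))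
    have b_comm_g : Commute (π b) (π g) := by
      refine QuotientGroup.commute_mk_of_commutatorElement_mem ?_
      rw [Nat.add_comm n k]
      exact Subgroup.commutator_lowerCentralSeries_le k n (Subgroup.commutator_mem_commutator hb hg)
    change π ⁅g, x⁆ = π (σ ⁅g, x⁆)
    rw [map_commutatorElement σ, hσg, hσx, map_commutatorElement π, map_commutatorElement π,
      map_mul, map_mul, commutatorElement_mul_mul_of_commute a_central b_comm_g]

theorem johnsonFiltration_commutator_le (k l : ℕ) :
    ⁅johnsonFiltration G k, johnsonFiltration G l⁆ ≤ johnsonFiltration G (k + l) := by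
  rw [Subgroup.commutator_le]
  intro σ hσ τ hτ
  refine commutatorElement_mem_fixFiltration_iff.mpr fun y => ?_
  obtain ⟨a, ha, hσy⟩ : ∃ a ∈ Γ k, σ y = y * a := ⟨_, hσ y, (mul_inv_cancel_left y _).symm⟩
  obtain ⟨b, hb, hτy⟩ : ∃ b ∈ Γ l, τ y = y * b := ⟨_, hτ y, (mul_inv_cancel_left y _).symm⟩
  have hσb : ((σ b : G) : G ⧸ Γ (k + l)) = b :=
    (QuotientGroup.eq.mpr (Nat.add_comm l k ▸ inv_mul_apply_mem_lowerCentralSeries hσ hb)).symm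
  have hτa : ((τ a : G) : G ⧸ Γ (k + l)) = a :=
    (QuotientGroup.eq.mpr (inv_mul_apply_mem_lowerCentralSeries hτ ha)).symm
  have hab : Commute (a : G ⧸ Γ (k + l)) b :=
    QuotientGroup.commute_mk_of_commutatorElement_mem <|
      Subgroup.lowerCentralSeries_antitone _ (Nat.le_succ _)
        (Subgroup.commutator_lowerCentralSeries_le k l (Subgroup.commutator_mem_commutator ha hb))
  rw [hτy, map_mul, hσy, map_mul, hτy]
  simp only [QuotientGroup.mk_mul, hσb, hτa, mul_assoc, hab.eq]

end johnsonFiltration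

theorem statement1 (G : Type*) [Group G] :
    (∀ k l : ℕ, 1 ≤ k → 1 ≤ l →
      ⁅johnsonFiltration G k, johnsonFiltration G l⁆ ≤ johnsonFiltration G (k + l)) ∧
    (∀ k : ℕ, 1 ≤ k →
      Subgroup.map (johnsonFiltration G 1).subtype
          ((⊤ : Subgroup ↥(johnsonFiltration G 1)).lowerCentralSeries (k - 1)) ≤
        johnsonFiltration G k) := by
  refine ⟨fun k l _ _ => johnsonFiltration_commutator_le k l, fun k hk => ?_⟩
  obtain ⟨m, rfl⟩ := Nat.exists_eq_add_of_le' hk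
  exact Subgroup.map_subtype_lowerCentralSeries_le le_rfl
    (fun m => johnsonFiltration_commutator_le (m + 1) 1) m
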